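/- Work in the polynomial ring $\mathbb{C}[s,t]$. Set $u_1 = s^2$, $v_1 = st$, $u_2 = st$, $v_2 = t^2$, and $u_1' = st$, $v_1' = t^2$, $u_2' = s^2$, $v_2' = st$. Then: (i) the four pairwise products agree, i.e. $u_1 u_2 = u_1' u_2'$, $u_1 v_2 = u_1' v_2'$, $v_1 u_2 = v_1' u_2'$, and $v_1 v_2 = v_1' v_2'$; and (ii) there do NOT exist nonzero scalars $\lambda_1, \lambda_2 \in \mathbb{C}$ such that $u_1' = \lambda_1 u_1$, $v_1' = \lambda_1 v_1$, $u_2' = \lambda_2 u_2$, and $v_2' = \lambda_2 v_2$. -/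
import Mathlib

open MvPolynomial

/-- The variable `s` in `ℂ[s,t]`. -/
noncomputable def segS : MvPolynomial (Fin 2) ℂ := X 0
/-- The variable `t` in `ℂ[s,t]`. -/
noncomputable def segT : MvPolynomial (Fin 2) ℂ := X 1

/-- The counterexample of Remark 2.3: the two quasimaps given by
`(u₁,v₁,u₂,v₂) = (s², st, st, t²)` and `(u₁',v₁',u₂',v₂') = (st, t², s², st)`
have equal pairwise products (hence the same image under the map induced by the
Segre embedding) but do not differ by a pair of nonzero scalars (hence are not
isomorphic as quasimaps). -/
theorem segre_not_injective :
    (segS ^ 2 * (segS * segT) = (segS * segT) * (segS ^ 2) ∧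
     segS ^ 2 * segT ^ 2 = (segS * segT) * (segS * segT) ∧
     (segS * segT) * (segS * segT) = segT ^ 2 * segS ^ 2 ∧
     (segS * segT) * segT ^ 2 = segT ^ 2 * (segS * segT)) ∧
    ¬ ∃ (l₁ l₂ : ℂ), l₁ ≠ 0 ∧ l₂ ≠ 0 ∧
        segS * segT = l₁ • segS ^ 2 ∧ segT ^ 2 = l₁ • (segS * segT) ∧
        segS ^ 2 = l₂ • (segS * segT) ∧ segS * segT = l₂ • segT ^ 2 := by
  constructor
  · refine ⟨by ring, by ring, by ring, by ring⟩
  · rintro ⟨l₁, l₂, -, -, -, -, h, -⟩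
    have := congrArg (eval (fun i : Fin 2 => if i = 0 then (1 : ℂ) else 0)) h
    simp [segS, segT, smul_eq_C_mul] at this
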